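/- (Theorem 2(i), identity ρ_r = ρ_s between the representational maximum correlation and its one-function form.) Assume X has at least two elements and Y has at least two elements. Let S₁ be the set of pairs (f : X × Z → ℝ, g : Y × Z → ℝ) such that ∑_x p(x) q(x,z) f(x,z) = 0 for every z, ∑_y p(y,z) g(y,z) = 0 for every z, A(f) = 1, and ∑_{y,z} p(y,z) g(y,z)² = 1. Define the representational maximum correlation ρ_r = sSup { ∑_{x,y,z} p(x,y) q(x,z) f(x,z) g(y,z) : (f,g) ∈ S₁ }, and define ρ_s² = sSup { B(f) : f : X × Z → ℝ with ∑_x p(x) q(x,z) f(x,z) = 0 for every z and A(f) = 1 }. Then ρ_r ≥ 0 and ρ_r² = ρ_s². -/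

import Mathlib

/-!
By Cauchy–Schwarz in `L²(p(y,z))`, the correlation of a fixed `f` with any normalized `g` is at
most `√B(f)`, since `B(f) = ∑ p(y,z) f̄(y,z)²` for the conditional mean `f̄ = rbarYZ f` of `f`
given `(y,z)`; equality holds for `g = f̄ / √B(f)`, which is centered because `f` is.
Hence `ρ_r = √ρ_s²`. Replacing `g` by `-g` makes the set of correlations symmetric, which gives
`ρ_r ≥ 0` and means that no witness `g` is needed when `B(f) = 0`.
-/

open Finset Filter Matrix

variable {X Y Z : Type*} [Fintype X] [Fintype Y] [Fintype Z]

/-- marginal p(x) = ∑_y p(x,y) -/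
noncomputable def pX (p : X → Y → ℝ) (x : X) : ℝ := ∑ y, p x y

/-- marginal p(y) = ∑_x p(x,y) -/
noncomputable def pY (p : X → Y → ℝ) (y : Y) : ℝ := ∑ x, p x y

/-- marginal p(z) = ∑_x p(x) q(x,z) -/
noncomputable def pZ (p : X → Y → ℝ) (q : X → Z → ℝ) (z : Z) : ℝ := ∑ x, pX p x * q x z

/-- joint p(y,z) = ∑_x p(x,y) q(x,z) -/
noncomputable def pYZ (p : X → Y → ℝ) (q : X → Z → ℝ) (y : Y) (z : Z) : ℝ := ∑ x, p x y * q x z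

/-- A(r) = ∑_{x,z} p(x) q(x,z) r(x,z)² -/
noncomputable def termA (p : X → Y → ℝ) (q : X → Z → ℝ) (r : X → Z → ℝ) : ℝ :=
  ∑ x, ∑ z, pX p x * q x z * r x z ^ 2

/-- C(r) = ∑_z (∑_x p(x) q(x,z) r(x,z))² / p(z) -/
noncomputable def termC (p : X → Y → ℝ) (q : X → Z → ℝ) (r : X → Z → ℝ) : ℝ :=
  ∑ z, (∑ x, pX p x * q x z * r x z) ^ 2 / pZ p q z

/-- B(r) = ∑_{y,z} (∑_x p(x,y) q(x,z) r(x,z))² / p(y,z) -/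
noncomputable def termB (p : X → Y → ℝ) (q : X → Z → ℝ) (r : X → Z → ℝ) : ℝ :=
  ∑ y, ∑ z, (∑ x, p x y * q x z * r x z) ^ 2 / pYZ p q y z

/-- r̄(z) = (∑_x p(x) q(x,z) r(x,z)) / p(z) -/
noncomputable def rbarZ (p : X → Y → ℝ) (q : X → Z → ℝ) (r : X → Z → ℝ) (z : Z) : ℝ :=
  (∑ x, pX p x * q x z * r x z) / pZ p q z

/-- r̄(y,z) = (∑_x p(x,y) q(x,z) r(x,z)) / p(y,z) -/
noncomputable def rbarYZ (p : X → Y → ℝ) (q : X → Z → ℝ) (r : X → Z → ℝ) (y : Y) (z : Z) : ℝ :=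
  (∑ x, p x y * q x z * r x z) / pYZ p q y z

/-- ρ_s² : the one-function form of the representational maximum correlation squared -/
noncomputable def rhoS2 (p : X → Y → ℝ) (q : X → Z → ℝ) : ℝ :=
  sSup {b : ℝ | ∃ f : X → Z → ℝ,
    (∀ z, ∑ x, pX p x * q x z * f x z = 0) ∧ termA p q f = 1 ∧ b = termB p q f}

/-- representational maximum correlation ρ_r(X,Y;Z) -/
noncomputable def rhoR (p : X → Y → ℝ) (q : X → Z → ℝ) : ℝ :=
  sSup {c : ℝ | ∃ f : X → Z → ℝ, ∃ g : Y → Z → ℝ,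
    (∀ z, ∑ x, pX p x * q x z * f x z = 0) ∧
    (∀ z, ∑ y, pYZ p q y z * g y z = 0) ∧
    termA p q f = 1 ∧ (∑ y, ∑ z, pYZ p q y z * g y z ^ 2) = 1 ∧
    c = ∑ x, ∑ y, ∑ z, p x y * q x z * f x z * g y z}

lemma Real.sSup_eq_sqrt_sSup {S T : Set ℝ} (hT : BddAbove T)
    (hST : ∀ c ∈ S, ∃ b ∈ T, c ≤ √b) (hTS : ∀ b ∈ T, 0 < b → √b ∈ S)
    (hneg : ∀ c ∈ S, -c ∈ S) : sSup S = √(sSup T) := by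
  have hS : BddAbove S := ⟨√(sSup T), fun c hc => by
    obtain ⟨b, hb, hcb⟩ := hST c hc
    exact hcb.trans (Real.sqrt_le_sqrt (le_csSup hT hb))⟩
  have hS0 : 0 ≤ sSup S := by
    obtain rfl | ⟨c, hc⟩ := S.eq_empty_or_nonempty
    · exact Real.sSup_empty.ge
    · refine Real.sSup_nonneg' ⟨|c|, ?_, abs_nonneg c⟩
      rcases abs_choice c with h | h <;> rw [h]
      exacts [hc, hneg c hc]
  refine le_antisymm (Real.sSup_le (fun c hc => ?_) (Real.sqrt_nonneg _)) ?_
  · obtain ⟨b, hb, hcb⟩ := hST c hc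
    exact hcb.trans (Real.sqrt_le_sqrt (le_csSup hT hb))
  · suffices sSup T ≤ sSup S ^ 2 by simpa [Real.sqrt_sq hS0] using Real.sqrt_le_sqrt this
    refine Real.sSup_le (fun b hb => ?_) (sq_nonneg _)
    rcases le_or_gt b 0 with hb0 | hb0
    · exact hb0.trans (sq_nonneg _)
    · calc b = √b ^ 2 := (Real.sq_sqrt hb0.le).symm
        _ ≤ sSup S ^ 2 := pow_le_pow_left₀ (Real.sqrt_nonneg b) (le_csSup hS (hTS b hb hb0)) 2

section

variable {p : X → Y → ℝ} {q : X → Z → ℝ}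

omit [Fintype Y] [Fintype Z] in
lemma pYZ_pos [Nonempty X] (hp : ∀ x y, 0 < p x y) (hq : ∀ x z, 0 < q x z) (y : Y) (z : Z) :
    0 < pYZ p q y z :=
  sum_pos (fun x _ => mul_pos (hp x y) (hq x z)) univ_nonempty

lemma termB_nonneg (hpYZ : ∀ y z, 0 ≤ pYZ p q y z) (f : X → Z → ℝ) : 0 ≤ termB p q f :=
  sum_nonneg fun y _ => sum_nonneg fun z _ => div_nonneg (sq_nonneg _) (hpYZ y z)

lemma termB_le_termA [Nonempty X] (hp : ∀ x y, 0 < p x y) (hq : ∀ x z, 0 < q x z)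
    (f : X → Z → ℝ) : termB p q f ≤ termA p q f := by
  have hsed (y : Y) (z : Z) : (∑ x, p x y * q x z * f x z) ^ 2 / pYZ p q y z
      ≤ ∑ x, p x y * q x z * f x z ^ 2 := by
    refine (sq_sum_div_le_sum_sq_div _ _ fun x _ => mul_pos (hp x y) (hq x z)).trans_eq ?_
    refine sum_congr rfl fun x _ => ?_
    have := (mul_pos (hp x y) (hq x z)).ne'
    field_simp
  calc termB p q f ≤ ∑ y, ∑ z, ∑ x, p x y * q x z * f x z ^ 2 :=
        sum_le_sum fun y _ => sum_le_sum fun z _ => hsed y z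
    _ = termA p q f := by
        simp only [termA, pX, sum_mul]
        rw [sum_comm_cycle]
        exact sum_congr rfl fun x _ => sum_comm

omit [Fintype Z] in
lemma sum_sum_p_mul_eq_sum_pX_mul (f : X → Z → ℝ) (z : Z) :
    ∑ y, ∑ x, p x y * q x z * f x z = ∑ x, pX p x * q x z * f x z := by
  rw [sum_comm]
  simp only [pX, sum_mul]

lemma sum_sum_sum_mul_eq_sum_sum_mul (f : X → Z → ℝ) (g : Y → Z → ℝ) :
    ∑ x, ∑ y, ∑ z, p x y * q x z * f x z * g y z
      = ∑ y, ∑ z, (∑ x, p x y * q x z * f x z) * g y z := by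
  simp only [sum_mul]
  exact sum_comm_cycle.symm

lemma correlation_le_sqrt_termB (hpYZ : ∀ y z, 0 < pYZ p q y z) (f : X → Z → ℝ)
    {g : Y → Z → ℝ} (hg : ∑ y, ∑ z, pYZ p q y z * g y z ^ 2 = 1) :
    ∑ x, ∑ y, ∑ z, p x y * q x z * f x z * g y z ≤ √(termB p q f) := by
  have hcs : (∑ x, ∑ y, ∑ z, p x y * q x z * f x z * g y z) ^ 2
      ≤ termB p q f * ∑ y, ∑ z, pYZ p q y z * g y z ^ 2 := by
    rw [sum_sum_sum_mul_eq_sum_sum_mul, termB]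
    simp only [← Fintype.sum_prod_type']
    refine sum_sq_le_sum_mul_sum_of_sq_le_mul _
      (fun i _ => div_nonneg (sq_nonneg _) (hpYZ i.1 i.2).le)
      (fun i _ => mul_nonneg (hpYZ i.1 i.2).le (sq_nonneg _)) fun i _ => le_of_eq ?_
    have := (hpYZ i.1 i.2).ne'
    field_simp
  rw [hg, mul_one] at hcs
  exact (le_abs_self _).trans (Real.abs_le_sqrt hcs)

lemma exists_correlation_eq_sqrt_termB (hpYZ : ∀ y z, 0 < pYZ p q y z) {f : X → Z → ℝ}
    (hf : ∀ z, ∑ x, pX p x * q x z * f x z = 0) (hB : 0 < termB p q f) :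
    ∃ g : Y → Z → ℝ, (∀ z, ∑ y, pYZ p q y z * g y z = 0) ∧
      ∑ y, ∑ z, pYZ p q y z * g y z ^ 2 = 1 ∧
      √(termB p q f) = ∑ x, ∑ y, ∑ z, p x y * q x z * f x z * g y z := by
  have hw (y : Y) (z : Z) : pYZ p q y z ≠ 0 := (hpYZ y z).ne'
  refine ⟨fun y z => rbarYZ p q f y z / √(termB p q f), fun z => ?_, ?_, ?_⟩
  · calc ∑ y, pYZ p q y z * (rbarYZ p q f y z / √(termB p q f))
        = (∑ y, ∑ x, p x y * q x z * f x z) / √(termB p q f) := by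
          rw [sum_div]
          refine sum_congr rfl fun y _ => ?_
          rw [rbarYZ, mul_div_assoc', mul_div_cancel₀ _ (hw y z)]
      _ = 0 := by rw [sum_sum_p_mul_eq_sum_pX_mul, hf z, zero_div]
  · calc ∑ y, ∑ z, pYZ p q y z * (rbarYZ p q f y z / √(termB p q f)) ^ 2
        = termB p q f / √(termB p q f) ^ 2 := by
          simp only [termB, sum_div]
          refine sum_congr rfl fun y _ => sum_congr rfl fun z _ => ?_
          have := hw y z
          rw [rbarYZ]
          field_simp
      _ = 1 := by rw [Real.sq_sqrt hB.le, div_self hB.ne']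
  · calc √(termB p q f) = termB p q f / √(termB p q f) := (Real.div_sqrt).symm
      _ = _ := by
          rw [sum_sum_sum_mul_eq_sum_sum_mul]
          simp only [termB, sum_div]
          refine sum_congr rfl fun y _ => sum_congr rfl fun z _ => ?_
          have := hw y z
          rw [rbarYZ]
          field_simp

end

theorem rhoR_eq_rhoS_general [Nontrivial X]
    (p : X → Y → ℝ) (q : X → Z → ℝ)
    (hp : ∀ x y, 0 < p x y)
    (hq : ∀ x z, 0 < q x z) :
    0 ≤ rhoR p q ∧ rhoR p q ^ 2 = rhoS2 p q := by
  have hpYZ := pYZ_pos hp hq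
  have hS2 : 0 ≤ rhoS2 p q :=
    Real.sSup_nonneg (by rintro _ ⟨f, -, -, rfl⟩; exact termB_nonneg (fun y z => (hpYZ y z).le) f)
  have hR : rhoR p q = √(rhoS2 p q) := by
    refine Real.sSup_eq_sqrt_sSup ⟨1, ?_⟩ ?_ ?_ ?_
    · rintro _ ⟨f, -, hA, rfl⟩
      exact hA ▸ termB_le_termA hp hq f
    · rintro _ ⟨f, g, hf, -, hA, hg, rfl⟩
      exact ⟨_, ⟨f, hf, hA, rfl⟩, correlation_le_sqrt_termB hpYZ f hg⟩
    · rintro _ ⟨f, hf, hA, rfl⟩ hB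
      obtain ⟨g, hg0, hg1, hval⟩ := exists_correlation_eq_sqrt_termB hpYZ hf hB
      exact ⟨f, g, hf, hg0, hA, hg1, hval⟩
    · rintro _ ⟨f, g, hf, hg0, hA, hg1, rfl⟩
      refine ⟨f, -g, hf, fun z => ?_, hA, ?_, ?_⟩
      · simp only [Pi.neg_apply, mul_neg, sum_neg_distrib, hg0 z, neg_zero]
      · simpa only [Pi.neg_apply, neg_sq] using hg1
      · simp only [Pi.neg_apply, mul_neg, sum_neg_distrib]
  exact ⟨hR ▸ Real.sqrt_nonneg _, hR ▸ Real.sq_sqrt hS2⟩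

/-- Theorem 2(i): ρ_r ≥ 0 and ρ_r² = ρ_s². -/
theorem rhoR_eq_rhoS [Nontrivial X] [Nontrivial Y] [Nonempty Z]
    (p : X → Y → ℝ) (q : X → Z → ℝ)
    (hp : ∀ x y, 0 < p x y) (hpsum : ∑ x, ∑ y, p x y = 1)
    (hq : ∀ x z, 0 < q x z) (hqsum : ∀ x, ∑ z, q x z = 1) :
    0 ≤ rhoR p q ∧ rhoR p q ^ 2 = rhoS2 p q :=
  rhoR_eq_rhoS_general p q hp hq
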